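/- Let d ≥ 2 be an even integer. A d-small symbol Θ has no d/2-cohook if and only if Θ admits defining intervals whose middle region has cardinality 0 and for which w_ud(Θ) contains no letter ∧. -/

import Mathlib

open scoped Classical

/-- A β-set: a set of integers containing all sufficiently small integers
and no sufficiently large ones. -/
def IsBetaSet (X : Set ℤ) : Prop :=
  (∃ c : ℤ, ∀ z : ℤ, z < c → z ∈ X) ∧ (∃ C : ℤ, ∀ z : ℤ, C ≤ z → z ∉ X)

/-- `topB X = max X`. -/
noncomputable def topB (X : Set ℤ) : ℤ := sSup X

/-- `botB X = max {z | every integer < z lies in X}`. -/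
noncomputable def botB (X : Set ℤ) : ℤ := sSup {z : ℤ | ∀ w : ℤ, w < z → w ∈ X}

/-- The charge `s(X)` of a β-set `X`, computed with the cutoff `c = botB X`. -/
noncomputable def chargeB (X : Set ℤ) : ℤ :=
  ((X ∩ Set.Ici (botB X)).ncard : ℤ) + botB X - 1

/-- `elemSeq X j` is the `(j+1)`-st largest element of the β-set `X`. -/
noncomputable def elemSeq (X : Set ℤ) : ℕ → ℤ
  | 0 => sSup X
  | n + 1 => sSup (X ∩ Set.Iio (elemSeq X n))

/-- The partition `λ(X)` of a β-set `X`, `0`-indexed: `partB X j = λ_{j+1}`,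
recovered from `x_j = s(X) + λ_j - j + 1` where `x_j` is the `j`-th largest element. -/
noncomputable def partB (X : Set ℤ) (j : ℕ) : ℕ :=
  (elemSeq X j - chargeB X + j).toNat

/-- The size `|λ(X)|` of the partition of a β-set `X`. -/
noncomputable def sizeB (X : Set ℤ) : ℕ := ∑ᶠ j : ℕ, partB X j

/-- A partition, encoded as a weakly decreasing eventually zero function (0-indexed). -/
def IsPartition (μ : ℕ → ℕ) : Prop :=
  (∀ j, μ (j + 1) ≤ μ j) ∧ ∃ N, ∀ j, N ≤ j → μ j = 0

/-- The β-set `{s + λ_j - j + 1 : j ≥ 1}` of the partition `μ` with charge `s`. -/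
def betaOf (μ : ℕ → ℕ) (s : ℤ) : Set ℤ :=
  {x : ℤ | ∃ j : ℕ, x = s + (μ j : ℤ) - (j : ℤ)}

/-- The symbol `Θ = (X₁, X₂)` is `d`-small with defining intervals
`I₁ = [a₁,b₁]` and `I₂ = [a₂,b₂]`. -/
structure IsDSmallWith (d : ℤ) (X₁ X₂ : Set ℤ) (a₁ b₁ a₂ b₂ : ℤ) : Prop where
  len₁ : b₁ - a₁ = d / 2 - 1
  len₂ : b₂ - a₂ = d / 2 - 1
  bot₁ : a₁ ≤ botB X₁
  bot₂ : a₂ ≤ botB X₂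
  top₁ : topB X₁ ≤ b₁
  top₂ : topB X₂ ≤ b₂
  cong : d ∣ b₂ - (b₁ + d / 2)

/-- The symbol `Θ = (X₁, X₂)` is `d`-small: it admits some pair of defining intervals. -/
def IsDSmall (d : ℤ) (X₁ X₂ : Set ℤ) : Prop :=
  ∃ a₁ b₁ a₂ b₂ : ℤ, IsDSmallWith d X₁ X₂ a₁ b₁ a₂ b₂

/-- The row (`1` or `2`) containing the right region. -/
def rightRow (b₁ b₂ : ℤ) : ℕ := if b₁ < b₂ then 2 else 1

/-- The row, as a β-set, containing the right region. -/
def rightSet (X₁ X₂ : Set ℤ) (b₁ b₂ : ℤ) : Set ℤ := if b₁ < b₂ then X₂ else X₁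

/-- The row, as a β-set, containing the left region. -/
def leftSet (X₁ X₂ : Set ℤ) (b₁ b₂ : ℤ) : Set ℤ := if b₁ < b₂ then X₁ else X₂

/-- The cardinality `kd` of the middle region. -/
def middleLen (d b₁ b₂ : ℤ) : ℤ := |b₂ - b₁| - d / 2

/-- The alphabet `{∧, ∨, ×, ∘}` of up-down diagrams: `up = ∧`, `dn = ∨`,
`cross = ×`, `circ = ∘`. -/
inductive UD : Type
  | up
  | dn
  | cross
  | circ
deriving DecidableEq

/-- The up-down diagram `w_ud(Θ)` of a `d`-small symbol with defining intervals:
`wud d X₁ X₂ b₁ b₂ i` is the letter `w_i` for `1 ≤ i ≤ d/2`.  Here the right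
region is `[m+1, m+d/2]` with `m = max b₁ b₂ - d/2`, `β_i = m + i`, and
`β_i - kd - d/2 = β_i - |b₂ - b₁|`. -/
noncomputable def wud (d : ℤ) (X₁ X₂ : Set ℤ) (b₁ b₂ : ℤ) (i : ℤ) : UD :=
  if (max b₁ b₂ - d / 2 + i) ∈ rightSet X₁ X₂ b₁ b₂ then
    if (max b₁ b₂ - d / 2 + i) - |b₂ - b₁| ∈ leftSet X₁ X₂ b₁ b₂ then UD.cross else UD.up
  else
    if (max b₁ b₂ - d / 2 + i) - |b₂ - b₁| ∈ leftSet X₁ X₂ b₁ b₂ then UD.dn else UD.circ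

/-- Removing an `e`-cohook in row `1` (the rows get interchanged afterwards). -/
def RemoveCohookRow1 (e : ℤ) (Θ Θ' : Set ℤ × Set ℤ) : Prop :=
  ∃ x : ℤ, x ∈ Θ.1 ∧ x - e ∉ Θ.2 ∧ Θ' = (Θ.2 ∪ {x - e}, Θ.1 \ {x})

/-- Removing an `e`-cohook in row `2` (the rows get interchanged afterwards). -/
def RemoveCohookRow2 (e : ℤ) (Θ Θ' : Set ℤ × Set ℤ) : Prop :=
  ∃ x : ℤ, x ∈ Θ.2 ∧ x - e ∉ Θ.1 ∧ Θ' = (Θ.2 \ {x}, Θ.1 ∪ {x - e})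

/-- Removing an `e`-cohook. -/
def RemoveCohook (e : ℤ) (Θ Θ' : Set ℤ × Set ℤ) : Prop :=
  RemoveCohookRow1 e Θ Θ' ∨ RemoveCohookRow2 e Θ Θ'

/-- The symbol `Θ` has an `e`-cohook. -/
def HasCohook (e : ℤ) (Θ : Set ℤ × Set ℤ) : Prop :=
  (∃ x : ℤ, x ∈ Θ.1 ∧ x - e ∉ Θ.2) ∨ (∃ x : ℤ, x ∈ Θ.2 ∧ x - e ∉ Θ.1)

/-- `C` is an `e`-cocore of `Θ`: a symbol with no `e`-cohooks obtained from `Θ`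
by a finite sequence of `e`-cohook removals. -/
def IsCocoreOf (e : ℤ) (Θ C : Set ℤ × Set ℤ) : Prop :=
  Relation.ReflTransGen (RemoveCohook e) Θ C ∧ ¬ HasCohook e C

/-- The `n`-fold composition of a relation. -/
def RelPow {α : Type*} (R : α → α → Prop) : ℕ → α → α → Prop
  | 0 => Eq
  | n + 1 => fun a c => ∃ b, R a b ∧ RelPow R n b c

/-- `(a, b)` (row `a`, column `b`, both `1`-indexed) is a box of the partition `μ`
(`μ` is `0`-indexed, so `μ (a-1)` is the `a`-th part `λ_a`). -/
def IsBox (μ : ℕ → ℕ) (a b : ℕ) : Prop := 1 ≤ a ∧ 1 ≤ b ∧ b ≤ μ (a - 1)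

/-- `(a, b)` is an addable box of `μ`: adjoining it yields a partition. -/
def IsAddableBox (μ : ℕ → ℕ) (a b : ℕ) : Prop :=
  1 ≤ a ∧ b = μ (a - 1) + 1 ∧ (a = 1 ∨ b ≤ μ (a - 2))

/-- `(a, b)` is a removable box of `μ`: deleting it yields a partition. -/
def IsRemovableBox (μ : ℕ → ℕ) (a b : ℕ) : Prop :=
  1 ≤ a ∧ b = μ (a - 1) ∧ 1 ≤ b ∧ μ a < b

/-- The charged content `t + b - a` of the box in row `a` and column `b`,
with respect to the charge `t`. -/
def chCont (t : ℤ) (a b : ℕ) : ℤ := t + (b : ℤ) - (a : ℤ)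

/-- Selecting the component `j ∈ {1, 2}` of a bipartition. -/
def compPart (μ₁ μ₂ : ℕ → ℕ) (j : ℕ) : ℕ → ℕ := if j = 1 then μ₁ else μ₂

/-- Selecting the component `j ∈ {1, 2}` of a pair of charges. -/
def compT (t₁ t₂ : ℤ) (j : ℕ) : ℤ := if j = 1 then t₁ else t₂

/-- The box `(a, b)` in component `j` is a good removable `i`-box of the
bipartition `(μ₁, μ₂)` with charges `(t₁, t₂)`, where `r` is the row containing
the right region: it is a removable box of charged content `≡ i (mod d)` and
there is no addable box `A` of either component with charged content `≡ i (mod d)`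
such that either `A` has strictly larger charged content, or `A` has equal
charged content and lies in component `r`. -/
def IsGoodRemovableBox (d : ℤ) (μ₁ μ₂ : ℕ → ℕ) (t₁ t₂ : ℤ) (r : ℕ) (i : ℤ)
    (j a b : ℕ) : Prop :=
  (j = 1 ∨ j = 2) ∧ IsRemovableBox (compPart μ₁ μ₂ j) a b ∧
    d ∣ chCont (compT t₁ t₂ j) a b - i ∧
    ∀ j' a' b' : ℕ, (j' = 1 ∨ j' = 2) → IsAddableBox (compPart μ₁ μ₂ j') a' b' →
      d ∣ chCont (compT t₁ t₂ j') a' b' - i →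
      ¬ (chCont (compT t₁ t₂ j) a b < chCont (compT t₁ t₂ j') a' b' ∨
        (chCont (compT t₁ t₂ j') a' b' = chCont (compT t₁ t₂ j) a b ∧ j' = r))

/-- The position of a letter in the order `× < ∧ < ∨ < ∘`. -/
def udIdx : UD → ℕ
  | UD.cross => 0
  | UD.up => 1
  | UD.dn => 2
  | UD.circ => 3

/-- The word `w₁ ⋯ w_{d/2}` reads `×^α ∧^w ∨^h ∘^β`: all `×`'s first, then all
`∧`'s, then all `∨`'s, then all `∘`'s. -/
def SortedUD (d : ℤ) (w : ℤ → UD) : Prop :=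
  ∀ i j : ℤ, 1 ≤ i → i ≤ j → j ≤ d / 2 → udIdx (w i) ≤ udIdx (w j)

/-- The number of occurrences of the letter `u` in the word `w₁ ⋯ w_{d/2}`. -/
noncomputable def countUD (d : ℤ) (w : ℤ → UD) (u : UD) : ℕ :=
  ((Finset.Icc (1 : ℤ) (d / 2)).filter fun i => w i = u).card

/-- `w'` is obtained from `w` by permuting the letters `∧` and `∨` among the
positions carrying `∧` or `∨`, leaving every `×` and `∘` in place. -/
def PermUpDn (d : ℤ) (w w' : ℤ → UD) : Prop :=
  (∀ i : ℤ, 1 ≤ i → i ≤ d / 2 →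
    ((w' i = UD.cross ↔ w i = UD.cross) ∧ (w' i = UD.circ ↔ w i = UD.circ))) ∧
  countUD d w' UD.up = countUD d w UD.up

/-- Replace every letter `∧` by `∨`, leaving the other letters unchanged. -/
def replaceUp : UD → UD
  | UD.up => UD.dn
  | u => u

/-!
The congruence `b₂ ≡ b₁ + d/2 (mod d)` makes the defining intervals disjoint, so every bead of
one row, say row 1, lies below the part `(-∞, bot X₂)` of row 2 that has no gaps. Without
`d/2`-cohooks `x - d/2` lies in the other row for every bead `x`; hence `top X₂ ≤ top X₁ + d/2`,
and the `d/2` positions ending at `top X₁` followed by the next `d/2` positions are defining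
intervals with empty middle region. For such intervals a letter `∧` at `β` is precisely a cohook
`(β, β - d/2)` in the right row, while a cohook starting in the left row, or below the right
region, would end in the gap-free part of the other row.
-/

namespace IsBetaSet

variable {X : Set ℤ}

lemma nonempty (hX : IsBetaSet X) : X.Nonempty := by
  obtain ⟨c, hc⟩ := hX.1
  exact ⟨c - 1, hc _ (by omega)⟩

lemma bddAbove (hX : IsBetaSet X) : BddAbove X := by
  obtain ⟨C, hC⟩ := hX.2
  exact ⟨C, fun z hz => not_lt.mp fun h => hC z h.le hz⟩

lemma le_topB (hX : IsBetaSet X) {x : ℤ} (hx : x ∈ X) : x ≤ topB X :=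
  le_csSup hX.bddAbove hx

lemma topB_mem (hX : IsBetaSet X) : topB X ∈ X :=
  Int.csSup_mem hX.nonempty hX.bddAbove

lemma mem_of_lt_botB (hX : IsBetaSet X) {w : ℤ} (hw : w < botB X) : w ∈ X := by
  obtain ⟨c, hc⟩ := hX.1
  obtain ⟨C, hC⟩ := hX.2
  have hbdd : BddAbove {z : ℤ | ∀ w : ℤ, w < z → w ∈ X} :=
    ⟨C, fun z hz => not_lt.mp fun h => hC C le_rfl (hz C h)⟩
  exact Int.csSup_mem (s := {z : ℤ | ∀ w : ℤ, w < z → w ∈ X}) ⟨c, hc⟩ hbdd w hw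

end IsBetaSet

lemma hasCohook_swap {e : ℤ} {X₁ X₂ : Set ℤ} : HasCohook e (X₂, X₁) ↔ HasCohook e (X₁, X₂) :=
  Or.comm

lemma not_hasCohook_iff {e : ℤ} {X₁ X₂ : Set ℤ} :
    ¬ HasCohook e (X₁, X₂) ↔ (∀ x ∈ X₁, x - e ∈ X₂) ∧ ∀ x ∈ X₂, x - e ∈ X₁ := by
  simp only [HasCohook, not_or, not_exists, not_and, not_not]

namespace IsDSmallWith

variable {d : ℤ} {X₁ X₂ : Set ℤ} {a₁ b₁ a₂ b₂ : ℤ}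

lemma symm (hd : Even d) (h : IsDSmallWith d X₁ X₂ a₁ b₁ a₂ b₂) :
    IsDSmallWith d X₂ X₁ a₂ b₂ a₁ b₁ where
  len₁ := h.len₂
  len₂ := h.len₁
  bot₁ := h.bot₂
  bot₂ := h.bot₁
  top₁ := h.top₂
  top₂ := h.top₁
  cong := by
    have h2 := Int.two_mul_ediv_two_of_even hd
    have : b₁ - (b₂ + d / 2) = -(b₂ - (b₁ + d / 2)) - d := by omega
    rw [this]
    exact (dvd_neg.mpr h.cong).sub dvd_rfl

lemma add_le_or_add_le (hd : 0 ≤ d) (h : IsDSmallWith d X₁ X₂ a₁ b₁ a₂ b₂) :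
    b₁ + d / 2 ≤ b₂ ∨ b₂ + d / 2 ≤ b₁ := by
  obtain ⟨k, hk⟩ := h.cong
  rcases le_or_gt 0 k with hk0 | hk0
  · left
    nlinarith
  · right
    have : d * k ≤ -d := by nlinarith
    omega

lemma topB_lt_botB_or (hd : 0 ≤ d) (h : IsDSmallWith d X₁ X₂ a₁ b₁ a₂ b₂) :
    topB X₁ < botB X₂ ∨ topB X₂ < botB X₁ := by
  have hb := h.add_le_or_add_le hd
  obtain ⟨_, _, _, _, _, _, -⟩ := h
  omega

end IsDSmallWith

section UpDown

variable {d : ℤ} {X₁ X₂ : Set ℤ} {b₁ b₂ : ℤ}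

lemma wud_eq_up_iff {i : ℤ} :
    wud d X₁ X₂ b₁ b₂ i = UD.up ↔
      max b₁ b₂ - d / 2 + i ∈ rightSet X₁ X₂ b₁ b₂ ∧
        max b₁ b₂ - d / 2 + i - |b₂ - b₁| ∉ leftSet X₁ X₂ b₁ b₂ := by
  unfold wud
  split_ifs <;> simp_all

lemma wud_swap (h : b₁ ≠ b₂) : wud d X₂ X₁ b₂ b₁ = wud d X₁ X₂ b₁ b₂ := by
  funext i
  unfold wud rightSet leftSet
  rw [max_comm, abs_sub_comm]
  rcases h.lt_or_gt with h | h <;> simp only [h, if_true, not_lt_of_gt h, if_false]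

lemma hasCohook_of_wud_eq_up (h : |b₂ - b₁| = d / 2) {i : ℤ}
    (hw : wud d X₁ X₂ b₁ b₂ i = UD.up) : HasCohook (d / 2) (X₁, X₂) := by
  rw [wud_eq_up_iff, h] at hw
  unfold rightSet leftSet at hw
  split_ifs at hw
  · exact Or.inr ⟨_, hw⟩
  · exact Or.inl ⟨_, hw⟩

end UpDown

section NoCohook

variable {d : ℤ} {X₁ X₂ : Set ℤ}

lemma exists_adjacent_of_topB_lt_botB (hd : 0 ≤ d) (hX₁ : IsBetaSet X₁)
    (hX₂ : IsBetaSet X₂) (hsmall : topB X₁ < botB X₁ + d / 2) (hsep : topB X₁ < botB X₂)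
    (hno : ∀ x ∈ X₂, x - d / 2 ∈ X₁) :
    ∃ a₁ b₁ a₂ b₂ : ℤ, IsDSmallWith d X₁ X₂ a₁ b₁ a₂ b₂ ∧ middleLen d b₁ b₂ = 0 := by
  have htop : topB X₂ - d / 2 ≤ topB X₁ := hX₁.le_topB (hno _ hX₂.topB_mem)
  refine ⟨topB X₁ - d / 2 + 1, topB X₁, topB X₁ + 1, topB X₁ + d / 2,
    ⟨by omega, by omega, by omega, by omega, le_rfl, by omega, by simp⟩, ?_⟩
  rw [middleLen, add_sub_cancel_left, abs_of_nonneg (by omega), sub_self]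

lemma exists_middleLen_eq_zero (hd : 0 ≤ d) (hdE : Even d) (hX₁ : IsBetaSet X₁)
    (hX₂ : IsBetaSet X₂) (hsm : IsDSmall d X₁ X₂) (hno : ¬ HasCohook (d / 2) (X₁, X₂)) :
    ∃ a₁ b₁ a₂ b₂ : ℤ, IsDSmallWith d X₁ X₂ a₁ b₁ a₂ b₂ ∧ middleLen d b₁ b₂ = 0 := by
  obtain ⟨a₁, b₁, a₂, b₂, hs⟩ := hsm
  obtain ⟨h₁₂, h₂₁⟩ := not_hasCohook_iff.mp hno
  have hsep := hs.topB_lt_botB_or hd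
  obtain ⟨_, _, _, _, _, _, -⟩ := hs
  rcases hsep with hsep | hsep
  · exact exists_adjacent_of_topB_lt_botB hd hX₁ hX₂ (by omega) hsep h₂₁
  · obtain ⟨a₂', b₂', a₁', b₁', hs', hmid⟩ :=
      exists_adjacent_of_topB_lt_botB hd hX₂ hX₁ (by omega) hsep h₁₂
    exact ⟨a₁', b₁', a₂', b₂', hs'.symm hdE, by rwa [middleLen, abs_sub_comm]⟩

end NoCohook

section Cohook

variable {d : ℤ} {X₁ X₂ : Set ℤ} {a₁ b₁ a₂ b₂ : ℤ}

lemma exists_wud_eq_up_of_eq_add (hd : 2 ≤ d) (hX₁ : IsBetaSet X₁) (hX₂ : IsBetaSet X₂)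
    (hs : IsDSmallWith d X₁ X₂ a₁ b₁ a₂ b₂) (hb : b₂ = b₁ + d / 2)
    (hc : HasCohook (d / 2) (X₁, X₂)) :
    ∃ i, 1 ≤ i ∧ i ≤ d / 2 ∧ wud d X₁ X₂ b₁ b₂ i = UD.up := by
  obtain ⟨_, _, _, _, _, _, -⟩ := hs
  obtain ⟨x, hx, hxe⟩ | ⟨x, hx, hxe⟩ := hc
  · have htop := hX₁.le_topB hx
    exact (hxe (hX₂.mem_of_lt_botB (by omega))).elim
  · have hxb : b₁ < x := not_le.mp fun hxb => hxe (hX₁.mem_of_lt_botB (by omega))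
    have hlt : b₁ < b₂ := by omega
    have htop := hX₂.le_topB hx
    refine ⟨x - b₁, by omega, by omega, ?_⟩
    have habs : |b₂ - b₁| = d / 2 := by rw [hb, add_sub_cancel_left, abs_of_nonneg (by omega)]
    rw [wud_eq_up_iff, max_eq_right hlt.le, habs, show b₂ - d / 2 + (x - b₁) = x by omega]
    simp only [rightSet, leftSet, if_pos hlt]
    exact ⟨hx, hxe⟩

lemma exists_wud_eq_up_of_hasCohook (hd : 2 ≤ d) (hdE : Even d) (hX₁ : IsBetaSet X₁)
    (hX₂ : IsBetaSet X₂) (hs : IsDSmallWith d X₁ X₂ a₁ b₁ a₂ b₂) (hmid : middleLen d b₁ b₂ = 0)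
    (hc : HasCohook (d / 2) (X₁, X₂)) :
    ∃ i, 1 ≤ i ∧ i ≤ d / 2 ∧ wud d X₁ X₂ b₁ b₂ i = UD.up := by
  rw [middleLen, sub_eq_zero] at hmid
  rcases (abs_eq (by omega)).mp hmid with hb | hb
  · exact exists_wud_eq_up_of_eq_add hd hX₁ hX₂ hs (by omega) hc
  · rw [← wud_swap (by omega)]
    exact exists_wud_eq_up_of_eq_add hd hX₂ hX₁ (hs.symm hdE) (by omega) (hasCohook_swap.mpr hc)

end Cohook

/-- A `d`-small symbol `Θ` has no `d/2`-cohook if and only if it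
admits defining intervals whose middle region has cardinality `0` and for which
`w_ud(Θ)` contains no letter `∧`. -/
theorem stmt12 (d : ℤ) (hd : 2 ≤ d) (hdE : Even d)
    (X₁ X₂ : Set ℤ) (hX₁ : IsBetaSet X₁) (hX₂ : IsBetaSet X₂)
    (hsm : IsDSmall d X₁ X₂) :
    ¬ HasCohook (d / 2) (X₁, X₂) ↔
      ∃ a₁ b₁ a₂ b₂ : ℤ, IsDSmallWith d X₁ X₂ a₁ b₁ a₂ b₂ ∧
        middleLen d b₁ b₂ = 0 ∧
        ∀ i : ℤ, 1 ≤ i → i ≤ d / 2 → wud d X₁ X₂ b₁ b₂ i ≠ UD.up := by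
  constructor
  · intro hno
    obtain ⟨a₁, b₁, a₂, b₂, hs, hmid⟩ :=
      exists_middleLen_eq_zero (by omega) hdE hX₁ hX₂ hsm hno
    refine ⟨a₁, b₁, a₂, b₂, hs, hmid, fun i _ _ hw => hno ?_⟩
    exact hasCohook_of_wud_eq_up (by rw [middleLen] at hmid; omega) hw
  · rintro ⟨a₁, b₁, a₂, b₂, hs, hmid, hup⟩ hc
    obtain ⟨i, hi₁, hi₂, hw⟩ := exists_wud_eq_up_of_hasCohook hd hdE hX₁ hX₂ hs hmid hc
    exact hup i hi₁ hi₂ hw
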